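/- Consider the linear program maximizing Σ_{i=1}^r (c_i + d_i) over variables c, d ∈ ℝ^r and ξ¹,…,ξʳ, ω¹,…,ωʳ ∈ ℝⁿ subject to, for all i = 1,…,r: c_i ≤ P_i A ξⁱ, P ξⁱ ≤ c + d (componentwise), d_i ≤ P_i ωⁱ, and F ωⁱ ≤ g (componentwise). If there exists q̄ ∈ ℝ^r with strictly positive entries such that R(q̄) is robust positively invariant for x⁺ = A x + w, w ∈ W, then this linear program attains an optimal solution (c*, d*, ξ*, ω*) and c* + d* = q*, the unique fixed point satisfying c(q*) + d = b(q*) = q*. If no such q̄ exists, the objective is unbounded above over the feasible set. -/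

import Mathlib

open Matrix

/-- Support function `h(X, v) = sup {vᵀ x : x ∈ X}`. -/
noncomputable def suppFn {n : ℕ} (X : Set (Fin n → ℝ)) (v : Fin n → ℝ) : ℝ :=
  sSup ((fun x => v ⬝ᵥ x) '' X)

/-- `R(q) = {z : P z ≤ q}`. -/
def Rset {n r : ℕ} (P : Matrix (Fin r) (Fin n) ℝ) (q : Fin r → ℝ) : Set (Fin n → ℝ) :=
  {z : Fin n → ℝ | P.mulVec z ≤ q}

/-- `b_i(q) = h(R(q), P_iᵀ)`. -/
noncomputable def bfun {n r : ℕ} (P : Matrix (Fin r) (Fin n) ℝ) (q : Fin r → ℝ) :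
    Fin r → ℝ :=
  fun i => suppFn (Rset P q) (P i)

/-- `c_i(q) = h(A·R(q), P_iᵀ)`. -/
noncomputable def cfun {n r : ℕ} (A : Matrix (Fin n) (Fin n) ℝ)
    (P : Matrix (Fin r) (Fin n) ℝ) (q : Fin r → ℝ) : Fin r → ℝ :=
  fun i => suppFn (A.mulVec '' Rset P q) (P i)

/-- `d_i = h(W, P_iᵀ)` where `W = {w : F w ≤ g}`. -/
noncomputable def dvec {n r p : ℕ} (F : Matrix (Fin p) (Fin n) ℝ) (g : Fin p → ℝ)
    (P : Matrix (Fin r) (Fin n) ℝ) : Fin r → ℝ :=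
  fun i => suppFn {w : Fin n → ℝ | F.mulVec w ≤ g} (P i)

/-- `R` is robust positively invariant for `x⁺ = A x + w`, `w ∈ W`. -/
def IsRPI {n : ℕ} (A : Matrix (Fin n) (Fin n) ℝ) (W R : Set (Fin n → ℝ)) : Prop :=
  ∀ x ∈ R, ∀ w ∈ W, A.mulVec x + w ∈ R

/-- Feasibility for the LP `ℙ`: for all `i`, `c_i ≤ P_i A ξⁱ`, `P ξⁱ ≤ c + d`,
`d_i ≤ P_i ωⁱ`, `F ωⁱ ≤ g`. -/
def LPFeasible {n r p : ℕ} (A : Matrix (Fin n) (Fin n) ℝ)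
    (F : Matrix (Fin p) (Fin n) ℝ) (g : Fin p → ℝ)
    (P : Matrix (Fin r) (Fin n) ℝ)
    (c d : Fin r → ℝ) (ξ ω : Fin r → Fin n → ℝ) : Prop :=
  ∀ i, c i ≤ P i ⬝ᵥ A.mulVec (ξ i) ∧ P.mulVec (ξ i) ≤ c + d ∧
       d i ≤ P i ⬝ᵥ ω i ∧ F.mulVec (ω i) ≤ g

section Aux

variable {n r p : ℕ} {A : Matrix (Fin n) (Fin n) ℝ} {P : Matrix (Fin r) (Fin n) ℝ}
  {F : Matrix (Fin p) (Fin n) ℝ} {g : Fin p → ℝ}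

lemma cont_dot (v : Fin n → ℝ) : Continuous fun z : Fin n → ℝ => v ⬝ᵥ z := by
  unfold dotProduct
  exact continuous_finset_sum _ fun i _ => continuous_const.mul (continuous_apply i)

lemma mem_Rset {q : Fin r → ℝ} {z : Fin n → ℝ} :
    z ∈ Rset P q ↔ ∀ i, P i ⬝ᵥ z ≤ q i := Iff.rfl

lemma zero_mem_Rset {q : Fin r → ℝ} (hq : 0 ≤ q) : (0 : Fin n → ℝ) ∈ Rset P q := by
  intro i
  have : P.mulVec (0 : Fin n → ℝ) = 0 := Matrix.mulVec_zero P
  rw [this]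
  exact hq i

lemma Rset_isClosed (P : Matrix (Fin r) (Fin n) ℝ) (q : Fin r → ℝ) :
    IsClosed (Rset P q) := by
  have h : Rset P q = ⋂ i, {z : Fin n → ℝ | P i ⬝ᵥ z ≤ q i} := by
    ext z
    simp only [Set.mem_iInter, Set.mem_setOf_eq]
    exact mem_Rset
  rw [h]
  exact isClosed_iInter fun i => isClosed_le (cont_dot _) continuous_const

lemma Rset_isBounded (hP0 : {z : Fin n → ℝ | P.mulVec z ≤ 0} = {0}) (q : Fin r → ℝ) :
    Bornology.IsBounded (Rset P q) := by
  rcases isEmpty_or_nonempty (Fin n) with hn | hn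
  · have hsub : Rset P q ⊆ {0} := by
      intro z _
      have : z = 0 := funext fun i => hn.elim i
      simp [this]
    exact Bornology.isBounded_singleton.subset hsub
  haveI hr : Nonempty (Fin r) := by
    by_contra hre
    have h1 : (fun _ => (1 : ℝ)) ∈ {z : Fin n → ℝ | P.mulVec z ≤ 0} := by
      intro i
      exact absurd (Nonempty.intro i) hre
    rw [hP0] at h1
    have := congrFun (Set.mem_singleton_iff.mp h1) hn.some
    exact one_ne_zero this
  haveI : Nontrivial (Fin n → ℝ) :=
    ⟨0, fun _ => 1, fun hcontra => zero_ne_one (congrFun hcontra hn.some)⟩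
  have hne : (Finset.univ : Finset (Fin r)).Nonempty := Finset.univ_nonempty
  set f : (Fin n → ℝ) → ℝ := fun z => Finset.univ.sup' hne (fun i => P i ⬝ᵥ z) with hf
  have hfc : Continuous f := by
    rw [continuous_iff_continuousAt]
    intro z
    exact Filter.Tendsto.finset_sup'_nhds_apply hne fun i _ => ((cont_dot (P i)).tendsto z)
  have hsne : (Metric.sphere (0 : Fin n → ℝ) 1).Nonempty :=
    NormedSpace.sphere_nonempty.mpr zero_le_one
  obtain ⟨z₀, hz₀s, hz₀min⟩ :=
    (isCompact_sphere (0 : Fin n → ℝ) 1).exists_isMinOn hsne hfc.continuousOn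
  have hz₀n : ‖z₀‖ = 1 := mem_sphere_zero_iff_norm.mp hz₀s
  set μ := f z₀ with hμdef
  have hμ : 0 < μ := by
    by_contra hμn
    push_neg at hμn
    have hall : ∀ i, P i ⬝ᵥ z₀ ≤ 0 := by
      intro i
      exact le_trans (Finset.le_sup' (fun i => P i ⬝ᵥ z₀) (Finset.mem_univ i)) hμn
    have hz0 : z₀ ∈ {z : Fin n → ℝ | P.mulVec z ≤ 0} := fun i => hall i
    rw [hP0] at hz0
    have : z₀ = 0 := Set.mem_singleton_iff.mp hz0
    rw [this, norm_zero] at hz₀n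
    exact zero_ne_one hz₀n
  set Q := Finset.univ.sup' hne q with hQ
  rw [isBounded_iff_forall_norm_le]
  refine ⟨max (Q / μ) 0, ?_⟩
  intro z hz
  rcases eq_or_ne z 0 with hz0 | hz0
  · rw [hz0, norm_zero]; exact le_max_right _ _
  have hzn : 0 < ‖z‖ := norm_pos_iff.mpr hz0
  set u := ‖z‖⁻¹ • z with hu
  have hun : u ∈ Metric.sphere (0 : Fin n → ℝ) 1 := by
    rw [mem_sphere_zero_iff_norm, hu, norm_smul, Real.norm_eq_abs,
      abs_of_pos (inv_pos.mpr hzn)]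
    exact inv_mul_cancel₀ (ne_of_gt hzn)
  have hμu : μ ≤ f u := hz₀min hun
  obtain ⟨i₀, _, hi₀⟩ := Finset.exists_mem_eq_sup' hne (fun i => P i ⬝ᵥ u)
  have hfu : f u = ‖z‖⁻¹ * (P i₀ ⬝ᵥ z) := by
    rw [hf]
    simp only
    rw [hi₀, hu, dotProduct_smul, smul_eq_mul]
  have hdle : P i₀ ⬝ᵥ z ≤ Q := le_trans (hz i₀) (Finset.le_sup' q (Finset.mem_univ i₀))
  have h1 : μ ≤ ‖z‖⁻¹ * Q := by
    rw [hfu] at hμu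
    calc μ ≤ ‖z‖⁻¹ * (P i₀ ⬝ᵥ z) := hμu
      _ ≤ ‖z‖⁻¹ * Q := by
        exact mul_le_mul_of_nonneg_left hdle (le_of_lt (inv_pos.mpr hzn))
  have h2 : ‖z‖ * μ ≤ Q := by
    have h3 := mul_le_mul_of_nonneg_left h1 (le_of_lt hzn)
    rwa [← mul_assoc, mul_inv_cancel₀ (ne_of_gt hzn), one_mul] at h3
  have : ‖z‖ ≤ Q / μ := (le_div_iff₀ hμ).mpr h2
  exact le_trans this (le_max_left _ _)

lemma Rset_isCompact (hP0 : {z : Fin n → ℝ | P.mulVec z ≤ 0} = {0}) (q : Fin r → ℝ) :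
    IsCompact (Rset P q) :=
  Metric.isCompact_of_isClosed_isBounded (Rset_isClosed P q) (Rset_isBounded hP0 q)

lemma suppFn_le {X : Set (Fin n → ℝ)} {v : Fin n → ℝ} {a : ℝ} (hne : X.Nonempty)
    (h : ∀ x ∈ X, v ⬝ᵥ x ≤ a) : suppFn X v ≤ a :=
  csSup_le (hne.image _) (by rintro y ⟨x, hx, rfl⟩; exact h x hx)

lemma le_suppFn {X : Set (Fin n → ℝ)} {v x : Fin n → ℝ} (hX : IsCompact X)
    (hx : x ∈ X) : v ⬝ᵥ x ≤ suppFn X v :=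
  le_csSup (hX.image (cont_dot v)).bddAbove ⟨x, hx, rfl⟩

lemma suppFn_attained {X : Set (Fin n → ℝ)} (hX : IsCompact X) (hne : X.Nonempty)
    (v : Fin n → ℝ) : ∃ x ∈ X, suppFn X v = v ⬝ᵥ x := by
  obtain ⟨x, hx, hmax⟩ := hX.exists_isMaxOn hne (cont_dot v).continuousOn
  exact ⟨x, hx, le_antisymm (suppFn_le hne fun y hy => hmax hy) (le_suppFn hX hx)⟩

lemma cfun_eq (A : Matrix (Fin n) (Fin n) ℝ) (P : Matrix (Fin r) (Fin n) ℝ)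
    (q : Fin r → ℝ) (i : Fin r) :
    cfun A P q i = suppFn (Rset P q) (A.vecMul (P i)) := by
  unfold cfun suppFn
  rw [Set.image_image]
  have h : (fun x => P i ⬝ᵥ A.mulVec x) = fun x => A.vecMul (P i) ⬝ᵥ x :=
    funext fun x => dotProduct_mulVec _ _ _
  rw [h]

lemma cfun_le {q : Fin r → ℝ} {i : Fin r} {a : ℝ} (hne : (Rset P q).Nonempty)
    (h : ∀ x ∈ Rset P q, P i ⬝ᵥ A.mulVec x ≤ a) : cfun A P q i ≤ a := by
  rw [cfun_eq]
  exact suppFn_le hne fun x hx => by rw [← dotProduct_mulVec]; exact h x hx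

lemma le_cfun (hP0 : {z : Fin n → ℝ | P.mulVec z ≤ 0} = {0}) {q : Fin r → ℝ}
    {i : Fin r} {x : Fin n → ℝ} (hx : x ∈ Rset P q) :
    P i ⬝ᵥ A.mulVec x ≤ cfun A P q i := by
  rw [cfun_eq, dotProduct_mulVec]
  exact le_suppFn (Rset_isCompact hP0 q) hx

lemma cfun_attained (hP0 : {z : Fin n → ℝ | P.mulVec z ≤ 0} = {0}) {q : Fin r → ℝ}
    (hne : (Rset P q).Nonempty) (i : Fin r) :
    ∃ x ∈ Rset P q, cfun A P q i = P i ⬝ᵥ A.mulVec x := by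
  rw [cfun_eq]
  obtain ⟨x, hx, hE⟩ := suppFn_attained (Rset_isCompact hP0 q) hne (A.vecMul (P i))
  exact ⟨x, hx, by rw [hE, ← dotProduct_mulVec]⟩

lemma zero_mem_W (hg : ∀ j, 0 < g j) :
    (0 : Fin n → ℝ) ∈ {w : Fin n → ℝ | F.mulVec w ≤ g} := by
  show F.mulVec 0 ≤ g
  rw [Matrix.mulVec_zero]
  exact fun j => (hg j).le

lemma dvec_le {i : Fin r} {a : ℝ} (hg : ∀ j, 0 < g j)
    (h : ∀ w ∈ {w : Fin n → ℝ | F.mulVec w ≤ g}, P i ⬝ᵥ w ≤ a) : dvec F g P i ≤ a :=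
  suppFn_le ⟨0, zero_mem_W hg⟩ h

lemma le_dvec (hWc : IsCompact {w : Fin n → ℝ | F.mulVec w ≤ g}) {i : Fin r}
    {w : Fin n → ℝ} (hw : w ∈ {w : Fin n → ℝ | F.mulVec w ≤ g}) :
    P i ⬝ᵥ w ≤ dvec F g P i :=
  le_suppFn hWc hw

lemma dvec_attained (hg : ∀ j, 0 < g j)
    (hWc : IsCompact {w : Fin n → ℝ | F.mulVec w ≤ g}) (i : Fin r) :
    ∃ w ∈ {w : Fin n → ℝ | F.mulVec w ≤ g}, dvec F g P i = P i ⬝ᵥ w :=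
  suppFn_attained hWc ⟨0, zero_mem_W hg⟩ (P i)

lemma dvec_nonneg (hg : ∀ j, 0 < g j)
    (hWc : IsCompact {w : Fin n → ℝ | F.mulVec w ≤ g}) (i : Fin r) :
    0 ≤ dvec F g P i := by
  have := le_dvec (P := P) hWc (zero_mem_W hg) (i := i)
  rwa [dotProduct_zero] at this

lemma cfun_nonneg (hP0 : {z : Fin n → ℝ | P.mulVec z ≤ 0} = {0}) {q : Fin r → ℝ}
    (hq : 0 ≤ q) (i : Fin r) : 0 ≤ cfun A P q i := by
  have := le_cfun (A := A) hP0 (zero_mem_Rset hq) (i := i)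
  rwa [Matrix.mulVec_zero, dotProduct_zero] at this

lemma cfun_mono (hP0 : {z : Fin n → ℝ | P.mulVec z ≤ 0} = {0}) {q q' : Fin r → ℝ}
    (hne : (Rset P q).Nonempty) (hqq' : q ≤ q') (i : Fin r) :
    cfun A P q i ≤ cfun A P q' i :=
  cfun_le hne fun x hx => le_cfun hP0 (fun j => (hx j).trans (hqq' j))

lemma cfun_smul_le (hP0 : {z : Fin n → ℝ | P.mulVec z ≤ 0} = {0}) {q : Fin r → ℝ}
    {l : ℝ} (hl : 0 < l) (hq : 0 ≤ q) (i : Fin r) :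
    cfun A P (l • q) i ≤ l * cfun A P q i := by
  have hlq : (0 : Fin r → ℝ) ≤ l • q := fun j => by
    simp only [Pi.smul_apply, smul_eq_mul, Pi.zero_apply]
    exact mul_nonneg hl.le (hq j)
  apply cfun_le ⟨0, zero_mem_Rset hlq⟩
  intro x hx
  have hx' : l⁻¹ • x ∈ Rset P q := by
    intro j
    have h1 : P.mulVec (l⁻¹ • x) = l⁻¹ • P.mulVec x := Matrix.mulVec_smul P l⁻¹ x
    rw [h1]
    have h2 : P.mulVec x j ≤ l * q j := hx j
    have h3 : l⁻¹ * P.mulVec x j ≤ l⁻¹ * (l * q j) :=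
      mul_le_mul_of_nonneg_left h2 (inv_pos.mpr hl).le
    rw [← mul_assoc, inv_mul_cancel₀ (ne_of_gt hl), one_mul] at h3
    exact h3
  have hle := le_cfun (A := A) hP0 hx' (i := i)
  have hsm : P i ⬝ᵥ A.mulVec (l⁻¹ • x) = l⁻¹ * (P i ⬝ᵥ A.mulVec x) := by
    rw [Matrix.mulVec_smul, dotProduct_smul, smul_eq_mul]
  rw [hsm] at hle
  have := mul_le_mul_of_nonneg_left hle hl.le
  rwa [← mul_assoc, mul_inv_cancel₀ (ne_of_gt hl), one_mul] at this

lemma dvec_pos (hg : ∀ j, 0 < g j)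
    (hWc : IsCompact {w : Fin n → ℝ | F.mulVec w ≤ g}) {i : Fin r}
    (hPi : P i ≠ 0) : 0 < dvec F g P i := by
  have hopen : IsOpen {y : Fin p → ℝ | ∀ j, y j < g j} := by
    have h : {y : Fin p → ℝ | ∀ j, y j < g j} = ⋂ j, {y : Fin p → ℝ | y j < g j} := by
      ext y; simp [Set.mem_iInter]
    rw [h]
    exact isOpen_iInter_of_finite fun j =>
      isOpen_lt (continuous_apply j) continuous_const
  have hcont : Continuous F.mulVec := by
    have : F.mulVec = fun w => fun j => F j ⬝ᵥ w := rfl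
    rw [this]
    exact continuous_pi fun j => cont_dot (F j)
  have hnhds : {w : Fin n → ℝ | F.mulVec w ≤ g} ∈ nhds (0 : Fin n → ℝ) := by
    have hsub : F.mulVec ⁻¹' {y : Fin p → ℝ | ∀ j, y j < g j} ⊆
        {w : Fin n → ℝ | F.mulVec w ≤ g} := fun w hw j => (hw j).le
    have ho : IsOpen (F.mulVec ⁻¹' {y : Fin p → ℝ | ∀ j, y j < g j}) :=
      hopen.preimage hcont
    have h0 : (0 : Fin n → ℝ) ∈ F.mulVec ⁻¹' {y : Fin p → ℝ | ∀ j, y j < g j} := by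
      show ∀ j, F.mulVec 0 j < g j
      rw [Matrix.mulVec_zero]
      exact hg
    exact Filter.mem_of_superset (ho.mem_nhds h0) hsub
  obtain ⟨ε, hε, hball⟩ := Metric.mem_nhds_iff.mp hnhds
  set c := (ε / 2) / (‖P i‖ + 1) with hc_def
  have hNn : (0 : ℝ) ≤ ‖P i‖ := norm_nonneg _
  have hc : 0 < c := div_pos (half_pos hε) (by linarith)
  have hmem : c • P i ∈ {w : Fin n → ℝ | F.mulVec w ≤ g} := by
    apply hball
    rw [Metric.mem_ball, dist_zero_right, norm_smul, Real.norm_eq_abs, abs_of_pos hc]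
    have hcN : c * (‖P i‖ + 1) = ε / 2 := div_mul_cancel₀ _ (by linarith)
    nlinarith
  have hle := le_dvec (P := P) hWc hmem (i := i)
  have hsm : P i ⬝ᵥ (c • P i) = c * (P i ⬝ᵥ P i) := by
    rw [dotProduct_smul, smul_eq_mul]
  obtain ⟨j, hj⟩ := Function.ne_iff.mp hPi
  have hdot : 0 < P i ⬝ᵥ P i := by
    have : P i ⬝ᵥ P i = ∑ k, P i k * P i k := rfl
    rw [this]
    apply Finset.sum_pos' (fun k _ => mul_self_nonneg _)
    exact ⟨j, Finset.mem_univ j, mul_self_pos.mpr hj⟩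
  rw [hsm] at hle
  exact lt_of_lt_of_le (mul_pos hc hdot) hle

end Aux

section Main

variable {n r p : ℕ} {A : Matrix (Fin n) (Fin n) ℝ} {P : Matrix (Fin r) (Fin n) ℝ}
  {F : Matrix (Fin p) (Fin n) ℝ} {g : Fin p → ℝ}

lemma cfun_nonpos_of_zero_row (hne : (Rset P q).Nonempty) {i : Fin r}
    (hPi : P i = 0) : cfun A P q i ≤ 0 :=
  cfun_le hne fun x _ => by rw [hPi, zero_dotProduct]

lemma dvec_nonpos_of_zero_row (hg : ∀ j, 0 < g j) {i : Fin r} (hPi : P i = 0) :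
    dvec F g P i ≤ 0 :=
  dvec_le hg fun w _ => by rw [hPi, zero_dotProduct]

/-- The key comparison lemma. -/
lemma key (hP0 : {z : Fin n → ℝ | P.mulVec z ≤ 0} = {0}) (hg : ∀ j, 0 < g j)
    (hWc : IsCompact {w : Fin n → ℝ | F.mulVec w ≤ g})
    {u v : Fin r → ℝ} (hv0 : 0 ≤ v)
    (hvpos : ∀ i, P i ≠ 0 → 0 < v i)
    (hpv : cfun A P v + dvec F g P ≤ v)
    (hu : u ≤ cfun A P u + dvec F g P)
    (hne : (Rset P u).Nonempty) : u ≤ v := by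
  have hzero : ∀ i, P i = 0 → u i ≤ 0 := by
    intro i hPi
    have h1 : cfun A P u i ≤ 0 := cfun_nonpos_of_zero_row hne hPi
    have h2 : dvec F g P i ≤ 0 := dvec_nonpos_of_zero_row hg hPi
    have h3 := hu i
    simp only [Pi.add_apply] at h3
    linarith
  rw [Pi.le_def]
  by_contra hcon
  push_neg at hcon
  obtain ⟨i₀, hi₀⟩ := hcon
  have hPi₀ : P i₀ ≠ 0 := by
    intro hz
    exact absurd (le_trans (hzero i₀ hz) (hv0 i₀)) (not_le.mpr hi₀)
  classical
  set S := Finset.univ.filter (fun i : Fin r => P i ≠ 0) with hS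
  have hSne : S.Nonempty := ⟨i₀, by simp [hS, hPi₀]⟩
  set l := S.sup' hSne (fun i => u i / v i) with hl
  have hl1 : 1 < l := by
    have h1 : u i₀ / v i₀ ≤ l :=
      Finset.le_sup' (fun i => u i / v i) (by simp [hS, hPi₀])
    have h2 : 1 < u i₀ / v i₀ := (one_lt_div (hvpos i₀ hPi₀)).mpr hi₀
    linarith
  have hlpos : 0 < l := by linarith
  have hub : u ≤ l • v := by
    intro i
    simp only [Pi.smul_apply, smul_eq_mul]
    by_cases hPi : P i = 0
    · exact le_trans (hzero i hPi) (mul_nonneg hlpos.le (hv0 i))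
    · have h1 : u i / v i ≤ l :=
        Finset.le_sup' (fun i => u i / v i) (by simp [hS, hPi])
      exact (div_le_iff₀ (hvpos i hPi)).mp h1
  have h2 : ∀ i, u i ≤ l * v i - (l - 1) * dvec F g P i := by
    intro i
    have ha : u i ≤ cfun A P u i + dvec F g P i := hu i
    have hb : cfun A P u i ≤ cfun A P (l • v) i := cfun_mono hP0 hne hub i
    have hc : cfun A P (l • v) i ≤ l * cfun A P v i := cfun_smul_le hP0 hlpos hv0 i
    have hd : cfun A P v i ≤ v i - dvec F g P i := by
      have := hpv i
      simp only [Pi.add_apply] at this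
      linarith
    have he : l * cfun A P v i ≤ l * (v i - dvec F g P i) :=
      mul_le_mul_of_nonneg_left hd hlpos.le
    have := hu i
    simp only [Pi.add_apply] at this
    nlinarith
  obtain ⟨istar, histarS, hval⟩ := Finset.exists_mem_eq_sup' hSne (fun i => u i / v i)
  have hPistar : P istar ≠ 0 := by
    simp only [hS, Finset.mem_filter] at histarS
    exact histarS.2
  have hvstar : 0 < v istar := hvpos istar hPistar
  have hustar : u istar = l * v istar := by
    rw [hl, hval]
    field_simp
  have hdstar : 0 < dvec F g P istar := dvec_pos hg hWc hPistar
  have := h2 istar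
  rw [hustar] at this
  nlinarith

/-- Tarski-style fixed point construction. -/
lemma tarski (hP0 : {z : Fin n → ℝ | P.mulVec z ≤ 0} = {0}) (hg : ∀ j, 0 < g j)
    (hWc : IsCompact {w : Fin n → ℝ | F.mulVec w ≤ g})
    (vb : Fin r → ℝ)
    (hbd : ∀ q : Fin r → ℝ, 0 ≤ q → q ≤ cfun A P q + dvec F g P → q ≤ vb) :
    ∃ qh : Fin r → ℝ, 0 ≤ qh ∧ cfun A P qh + dvec F g P = qh ∧ dvec F g P ≤ qh := by
  set T := {q : Fin r → ℝ | 0 ≤ q ∧ q ≤ cfun A P q + dvec F g P} with hT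
  have h0T : (0 : Fin r → ℝ) ∈ T := by
    refine ⟨le_refl _, fun i => ?_⟩
    simp only [Pi.add_apply, Pi.zero_apply]
    have h1 := cfun_nonneg (A := A) hP0 (le_refl (0 : Fin r → ℝ)) i
    have h2 := dvec_nonneg (P := P) hg hWc i
    linarith
  set qh : Fin r → ℝ := fun i => sSup ((fun q : Fin r → ℝ => q i) '' T) with hqh
  have hbdd : ∀ i, BddAbove ((fun q : Fin r → ℝ => q i) '' T) := by
    intro i
    refine ⟨vb i, ?_⟩
    rintro y ⟨q, hqT, rfl⟩
    exact hbd q hqT.1 hqT.2 i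
  have hTne : ∀ i, ((fun q : Fin r → ℝ => q i) '' T).Nonempty :=
    fun i => ⟨0, 0, h0T, rfl⟩
  have hqhub : ∀ q ∈ T, q ≤ qh := fun q hq i => le_csSup (hbdd i) ⟨q, hq, rfl⟩
  have hqh0 : 0 ≤ qh := hqhub 0 h0T
  have hqhle : qh ≤ cfun A P qh + dvec F g P := by
    intro i
    apply csSup_le (hTne i)
    rintro y ⟨q, hqT, rfl⟩
    have h1 : q i ≤ cfun A P q i + dvec F g P i := hqT.2 i
    have h2 : cfun A P q i ≤ cfun A P qh i :=
      cfun_mono hP0 ⟨0, zero_mem_Rset hqT.1⟩ (hqhub q hqT) i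
    simp only [Pi.add_apply]
    linarith
  have hphiT : (cfun A P qh + dvec F g P) ∈ T := by
    constructor
    · intro i
      simp only [Pi.add_apply, Pi.zero_apply]
      have h1 := cfun_nonneg (A := A) hP0 hqh0 i
      have h2 := dvec_nonneg (P := P) hg hWc i
      linarith
    · intro i
      simp only [Pi.add_apply]
      have h2 : cfun A P qh i ≤ cfun A P (cfun A P qh + dvec F g P) i :=
        cfun_mono hP0 ⟨0, zero_mem_Rset hqh0⟩ hqhle i
      linarith
  have hfix : cfun A P qh + dvec F g P = qh :=
    le_antisymm (hqhub _ hphiT) hqhle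
  have hdT : dvec F g P ∈ T := by
    refine ⟨fun i => dvec_nonneg (P := P) hg hWc i, fun i => ?_⟩
    simp only [Pi.add_apply]
    have h1 := cfun_nonneg (A := A) hP0
      (fun i => dvec_nonneg (P := P) hg hWc i) i
    linarith
  exact ⟨qh, hqh0, hfix, hqhub _ hdT⟩

lemma rpi_of_le (hP0 : {z : Fin n → ℝ | P.mulVec z ≤ 0} = {0})
    (hWc : IsCompact {w : Fin n → ℝ | F.mulVec w ≤ g}) {q : Fin r → ℝ}
    (hq : cfun A P q + dvec F g P ≤ q) :
    ∀ x ∈ Rset P q, ∀ w ∈ {w : Fin n → ℝ | F.mulVec w ≤ g},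
      A.mulVec x + w ∈ Rset P q := by
  intro x hx w hw i
  show P i ⬝ᵥ (A.mulVec x + w) ≤ q i
  rw [dotProduct_add]
  have h1 : P i ⬝ᵥ A.mulVec x ≤ cfun A P q i := le_cfun hP0 hx
  have h2 : P i ⬝ᵥ w ≤ dvec F g P i := le_dvec hWc hw
  have h3 := hq i
  simp only [Pi.add_apply] at h3
  linarith

lemma le_of_rpi (hP0 : {z : Fin n → ℝ | P.mulVec z ≤ 0} = {0}) (hg : ∀ j, 0 < g j)
    {q : Fin r → ℝ} (hq0 : 0 ≤ q)
    (hrpi : ∀ x ∈ Rset P q, ∀ w ∈ {w : Fin n → ℝ | F.mulVec w ≤ g},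
      A.mulVec x + w ∈ Rset P q) :
    cfun A P q + dvec F g P ≤ q := by
  intro i
  show cfun A P q i + dvec F g P i ≤ q i
  have hkey : cfun A P q i ≤ q i - dvec F g P i := by
    apply cfun_le ⟨0, zero_mem_Rset hq0⟩
    intro x hx
    have hd : dvec F g P i ≤ q i - P i ⬝ᵥ A.mulVec x := by
      apply dvec_le hg
      intro w hw
      have h3 : P i ⬝ᵥ (A.mulVec x + w) ≤ q i := (hrpi x hx w hw) i
      rw [dotProduct_add] at h3
      linarith
    linarith
  linarith

lemma bfun_fixed (hP0 : {z : Fin n → ℝ | P.mulVec z ≤ 0} = {0}) (hg : ∀ j, 0 < g j)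
    (hWc : IsCompact {w : Fin n → ℝ | F.mulVec w ≤ g}) {q : Fin r → ℝ}
    (hq0 : 0 ≤ q) (hfix : cfun A P q + dvec F g P = q) :
    bfun P q = q := by
  funext i
  apply le_antisymm
  · exact suppFn_le ⟨0, zero_mem_Rset hq0⟩ fun x hx => hx i
  · obtain ⟨x, hxm, hxv⟩ := cfun_attained (A := A) hP0 ⟨0, zero_mem_Rset hq0⟩ i
    obtain ⟨w, hwm, hwv⟩ := dvec_attained (P := P) hg hWc i
    have hz : A.mulVec x + w ∈ Rset P q := rpi_of_le hP0 hWc hfix.le x hxm w hwm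
    have hval : P i ⬝ᵥ (A.mulVec x + w) = q i := by
      rw [dotProduct_add, ← hxv, ← hwv]
      have := congrFun hfix i
      simpa using this
    calc q i = P i ⬝ᵥ (A.mulVec x + w) := hval.symm
      _ ≤ bfun P q i := le_suppFn (Rset_isCompact hP0 q) hz

end Main

/-- if some `R(q̄)` with `q̄ > 0` is RPI, then the LP `ℙ` (maximize
`∑ i (c_i + d_i)` over its feasible set) attains an optimal solution, and `c* + d*`
is the unique fixed point `q*` of `c(q) + d = b(q) = q`; if no such `q̄` exists, the
objective is unbounded above on the feasible set. -/
theorem lp_attains_fixedPoint_or_unbounded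
    (n r p : ℕ)
    (A : Matrix (Fin n) (Fin n) ℝ)
    (hA : spectralRadius ℂ (A.map Complex.ofReal) < 1)
    (F : Matrix (Fin p) (Fin n) ℝ) (g : Fin p → ℝ)
    (hg : ∀ j, 0 < g j)
    (W : Set (Fin n → ℝ)) (hW : W = {w : Fin n → ℝ | F.mulVec w ≤ g})
    (hWcompact : IsCompact W)
    (P : Matrix (Fin r) (Fin n) ℝ)
    (hspan : Submodule.span ℝ (Set.range fun i => P i) = ⊤)
    (hP0 : {z : Fin n → ℝ | P.mulVec z ≤ 0} = {0}) :
    ((∃ qbar : Fin r → ℝ, (∀ i, 0 < qbar i) ∧ IsRPI A W (Rset P qbar)) →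
      ∃ (cs ds : Fin r → ℝ) (ξs ωs : Fin r → Fin n → ℝ),
        LPFeasible A F g P cs ds ξs ωs ∧
        (∀ (c d : Fin r → ℝ) (ξ ω : Fin r → Fin n → ℝ),
          LPFeasible A F g P c d ξ ω →
          ∑ i, (c i + d i) ≤ ∑ i, (cs i + ds i)) ∧
        (cfun A P (cs + ds) + dvec F g P = bfun P (cs + ds) ∧
          bfun P (cs + ds) = cs + ds) ∧
        (∀ q : Fin r → ℝ, (∀ i, 0 < q i) →
          cfun A P q + dvec F g P = bfun P q → bfun P q = q → q = cs + ds)) ∧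
    ((¬ ∃ qbar : Fin r → ℝ, (∀ i, 0 < qbar i) ∧ IsRPI A W (Rset P qbar)) →
      ∀ B : ℝ, ∃ (c d : Fin r → ℝ) (ξ ω : Fin r → Fin n → ℝ),
        LPFeasible A F g P c d ξ ω ∧ B < ∑ i, (c i + d i)) := by
  have hWc : IsCompact {w : Fin n → ℝ | F.mulVec w ≤ g} := hW ▸ hWcompact
  constructor
  · rintro ⟨qbar, hqpos, hqrpi⟩
    rw [hW] at hqrpi
    have hq0 : 0 ≤ qbar := fun i => (hqpos i).le
    have hpv : cfun A P qbar + dvec F g P ≤ qbar :=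
      le_of_rpi hP0 hg hq0 (fun x hx w hw => hqrpi x hx w hw)
    have hbd : ∀ q : Fin r → ℝ, 0 ≤ q → q ≤ cfun A P q + dvec F g P → q ≤ qbar :=
      fun q h0 hle =>
        key hP0 hg hWc hq0 (fun i _ => hqpos i) hpv hle ⟨0, zero_mem_Rset h0⟩
    obtain ⟨qh, hqh0, hqhfix, hdqh⟩ := tarski hP0 hg hWc qbar hbd
    have hξ : ∀ i, ∃ x ∈ Rset P qh, cfun A P qh i = P i ⬝ᵥ A.mulVec x :=
      fun i => cfun_attained hP0 ⟨0, zero_mem_Rset hqh0⟩ i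
    choose ξ hξmem hξval using hξ
    have hω : ∀ i : Fin r, ∃ w ∈ {w : Fin n → ℝ | F.mulVec w ≤ g},
        dvec F g P i = P i ⬝ᵥ w := fun i => dvec_attained hg hWc i
    choose ω hωmem hωval using hω
    have hbf : bfun P qh = qh := bfun_fixed hP0 hg hWc hqh0 hqhfix
    refine ⟨cfun A P qh, dvec F g P, ξ, ω, ?_, ?_, ?_, ?_⟩
    · intro i
      refine ⟨(hξval i).le, ?_, (hωval i).le, hωmem i⟩
      rw [hqhfix]
      exact hξmem i
    · intro c d ξ' ω' hfeas
      rcases isEmpty_or_nonempty (Fin r) with hre | hre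
      · rw [Finset.univ_eq_empty]
        simp
      have hu : c + d ≤ cfun A P (c + d) + dvec F g P := by
        intro i
        obtain ⟨h1, h2, h3, h4⟩ := hfeas i
        have h5 : P i ⬝ᵥ A.mulVec (ξ' i) ≤ cfun A P (c + d) i := le_cfun hP0 h2
        have h6 : P i ⬝ᵥ ω' i ≤ dvec F g P i := le_dvec hWc h4
        simp only [Pi.add_apply]
        linarith
      have hne : (Rset P (c + d)).Nonempty := ⟨ξ' hre.some, (hfeas hre.some).2.1⟩
      have hvpos : ∀ i, P i ≠ 0 → 0 < qh i :=
        fun i hPi => lt_of_lt_of_le (dvec_pos hg hWc hPi) (hdqh i)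
      have hle : c + d ≤ qh := key hP0 hg hWc hqh0 hvpos hqhfix.le hu hne
      calc ∑ i, (c i + d i) ≤ ∑ i, qh i := Finset.sum_le_sum fun i _ => hle i
        _ = ∑ i, (cfun A P qh i + dvec F g P i) := by
          refine Finset.sum_congr rfl fun i _ => ?_
          have := congrFun hqhfix i
          simpa using this.symm
    · rw [hqhfix]
      exact ⟨hqhfix.trans hbf.symm, hbf⟩
    · intro q hqpos' h1 h2
      rw [hqhfix]
      have hfixq : cfun A P q + dvec F g P = q := h1.trans h2
      have hq0' : 0 ≤ q := fun i => (hqpos' i).le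
      have ha : q ≤ qh := key hP0 hg hWc hqh0
        (fun i hPi => lt_of_lt_of_le (dvec_pos hg hWc hPi) (hdqh i))
        hqhfix.le hfixq.ge ⟨0, zero_mem_Rset hq0'⟩
      have hb : qh ≤ q := key hP0 hg hWc hq0' (fun i _ => hqpos' i)
        hfixq.le hqhfix.ge ⟨0, zero_mem_Rset hqh0⟩
      exact le_antisymm ha hb
  · intro hno B
    by_contra hcon
    push_neg at hcon
    have hbd : ∀ q : Fin r → ℝ, 0 ≤ q → q ≤ cfun A P q + dvec F g P →
        q ≤ fun _ => B := by
      intro q h0 hle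
      have hξ : ∀ i, ∃ x ∈ Rset P q, cfun A P q i = P i ⬝ᵥ A.mulVec x :=
        fun i => cfun_attained hP0 ⟨0, zero_mem_Rset h0⟩ i
      choose ξ hξmem hξval using hξ
      have hω : ∀ i : Fin r, ∃ w ∈ {w : Fin n → ℝ | F.mulVec w ≤ g},
          dvec F g P i = P i ⬝ᵥ w := fun i => dvec_attained hg hWc i
      choose ω hωmem hωval using hω
      have hfeas : LPFeasible A F g P (cfun A P q) (dvec F g P) ξ ω := by
        intro i
        refine ⟨(hξval i).le, ?_, (hωval i).le, hωmem i⟩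
        intro j
        exact le_trans (hξmem i j) (hle j)
      have hsum := hcon (cfun A P q) (dvec F g P) ξ ω hfeas
      intro i
      show q i ≤ B
      have h1 : ∀ j : Fin r, 0 ≤ cfun A P q j + dvec F g P j :=
        fun j => add_nonneg (cfun_nonneg hP0 h0 j) (dvec_nonneg hg hWc j)
      have h2 : cfun A P q i + dvec F g P i ≤ ∑ j, (cfun A P q j + dvec F g P j) :=
        Finset.single_le_sum (fun j _ => h1 j) (Finset.mem_univ i)
      have h3 := hle i
      simp only [Pi.add_apply] at h3
      linarith
    obtain ⟨qh, hqh0, hqhfix, hdqh⟩ := tarski hP0 hg hWc (fun _ => B) hbd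
    have hrpi := rpi_of_le hP0 hWc hqhfix.le
    set qbar : Fin r → ℝ := fun i => if P i = 0 then qh i + 1 else qh i with hqbar
    have hpos : ∀ i, 0 < qbar i := by
      intro i
      by_cases hPi : P i = 0
      · simp only [hqbar, if_pos hPi]
        have h0 : (0:ℝ) ≤ qh i := hqh0 i
        linarith
      · simp only [hqbar, if_neg hPi]
        exact lt_of_lt_of_le (dvec_pos hg hWc hPi) (hdqh i)
    have hReq : Rset P qbar = Rset P qh := by
      ext z
      constructor
      · intro hz i
        by_cases hPi : P i = 0
        · show P i ⬝ᵥ z ≤ qh i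
          rw [hPi, zero_dotProduct]
          exact hqh0 i

        · have h := hz i
          show P i ⬝ᵥ z ≤ qh i
          exact (by simpa [hqbar, if_neg hPi] using h : (P *ᵥ z) i ≤ qh i)
      · intro hz i
        by_cases hPi : P i = 0
        · show P i ⬝ᵥ z ≤ qbar i
          simp only [hqbar, if_pos hPi]
          rw [hPi, zero_dotProduct]
          have h0 : (0:ℝ) ≤ qh i := hqh0 i
          linarith
        · show P i ⬝ᵥ z ≤ qbar i
          simp only [hqbar, if_neg hPi]
          exact hz i
    refine hno ⟨qbar, hpos, ?_⟩
    rw [hW, hReq]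
    exact fun x hx w hw => hrpi x hx w hw
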